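/- arXiv:2007.02031 — 2 statements merged into one kernel-verified Lean document; each statement's English description precedes it below -/
import Mathlib

section
/- Let x be a positive integer and k ≥ 1 an integer with T^(k)(x) = x (where T^(k) denotes the k-fold iterate of T). Let r₂ be the number of indices i with 0 ≤ i < k such that T^(i)(x) is odd, and let r₁ = k − r₂. Then there is a positive integer A with x · (2^(r₁+r₂) − 3^(r₂)) = A; in particular 2^(r₁+r₂) > 3^(r₂), and consequently r₁ > r₂ · (log₂ 3 − 1). -/
/-- The Collatz map `T(x) = x/2` if `x` is even, `T(x) = (3x+1)/2` if `x` is odd. -/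
def collatzT (x : ℕ) : ℕ := if x % 2 = 0 then x / 2 else (3 * x + 1) / 2

lemma collatz_key (x : ℕ) : ∀ n, ∃ c : ℕ,
    2 ^ n * (collatzT^[n] x) =
      3 ^ (((Finset.range n).filter (fun i => (collatzT^[i] x) % 2 = 1)).card) * x + c := by
  intro n
  induction n with
  | zero => exact ⟨0, by simp⟩
  | succ n ih =>
    obtain ⟨c, hc⟩ := ih
    set y := collatzT^[n] x with hy
    have hit : collatzT^[n+1] x = collatzT y := Function.iterate_succ_apply' _ _ _
    have hfilter : (Finset.range (n+1)).filter (fun i => (collatzT^[i] x) % 2 = 1) =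
        if (y % 2 = 1) then insert n ((Finset.range n).filter (fun i => (collatzT^[i] x) % 2 = 1))
        else (Finset.range n).filter (fun i => (collatzT^[i] x) % 2 = 1) := by
      rw [Finset.range_add_one, Finset.filter_insert]
    by_cases hpar : y % 2 = 1
    · have h2 : 2 * collatzT y = 3 * y + 1 := by
        unfold collatzT
        rw [if_neg (by omega)]
        omega
      refine ⟨3 * c + 2 ^ n, ?_⟩
      rw [hit, hfilter, if_pos hpar, Finset.card_insert_of_notMem (by simp)]
      have e1 : 2 ^ (n+1) * collatzT y = 2 ^ n * (2 * collatzT y) := by ring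
      rw [e1, h2]
      have e2 : 2 ^ n * (3 * y + 1) = 3 * (2 ^ n * y) + 2 ^ n := by ring
      rw [e2, hc]
      ring
    · have h2 : 2 * collatzT y = y := by
        unfold collatzT
        rw [if_pos (by omega)]
        omega
      refine ⟨c, ?_⟩
      rw [hit, hfilter, if_neg hpar]
      have e1 : 2 ^ (n+1) * collatzT y = 2 ^ n * (2 * collatzT y) := by ring
      rw [e1, h2, hc]

theorem stmt_9 (x k : ℕ) (hx : 0 < x) (hk : 1 ≤ k) (hcyc : collatzT^[k] x = x)
    (r₂ r₁ : ℕ)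
    (hr₂ : r₂ = ((Finset.range k).filter (fun i => (collatzT^[i] x) % 2 = 1)).card)
    (hr₁ : r₁ = k - r₂) :
    (∃ A : ℤ, 0 < A ∧ (x : ℤ) * (2 ^ (r₁ + r₂) - 3 ^ r₂) = A) ∧
    3 ^ r₂ < 2 ^ (r₁ + r₂) ∧
    (r₂ : ℝ) * (Real.logb 2 3 - 1) < (r₁ : ℝ) := by
  obtain ⟨c, hc⟩ := collatz_key x k
  rw [hcyc, ← hr₂] at hc
  have hr₂le : r₂ ≤ k := by
    rw [hr₂]
    exact (Finset.card_filter_le _ _).trans (by simp)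
  have hsum : r₁ + r₂ = k := by omega
  have hne : (3:ℕ) ^ r₂ ≠ 2 ^ k := by
    intro h
    have h2 : (2:ℕ) ^ k % 2 = 0 := by
      have : (2:ℕ) ^ k = 2 * 2 ^ (k-1) := by
        rw [← pow_succ']
        congr 1
        omega
      omega
    have h3 : (3:ℕ) ^ r₂ % 2 = 1 := by
      rw [Nat.pow_mod]
      simp
    omega
  have hle : (3:ℕ) ^ r₂ ≤ 2 ^ k := by
    have : 3 ^ r₂ * x ≤ 2 ^ k * x := by omega
    exact Nat.le_of_mul_le_mul_right this hx
  have hlt : (3:ℕ) ^ r₂ < 2 ^ k := lt_of_le_of_ne hle hne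
  have hltk : (3:ℕ) ^ r₂ < 2 ^ (r₁ + r₂) := by rwa [hsum]
  refine ⟨⟨(x : ℤ) * (2 ^ (r₁ + r₂) - 3 ^ r₂), ?_, rfl⟩, hltk, ?_⟩
  · apply mul_pos (by exact_mod_cast hx)
    have : (3:ℤ) ^ r₂ < 2 ^ (r₁ + r₂) := by exact_mod_cast hltk
    omega
  · have hR : (3:ℝ) ^ r₂ < 2 ^ (r₁ + r₂) := by exact_mod_cast hltk
    have hlog : Real.logb 2 (3 ^ r₂) < Real.logb 2 (2 ^ (r₁ + r₂)) :=
      Real.logb_lt_logb (by norm_num) (by positivity) hR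
    rw [Real.logb_pow, Real.logb_pow, Real.logb_self_eq_one (by norm_num : (1:ℝ) < 2)] at hlog
    push_cast at hlog
    nlinarith [hlog]
end

section
/- For every positive integer x, T(T(T(x))) ≠ x; that is, the Collatz map has no cycle of length three. -/
theorem stmt_10 (x : ℕ) (hx : 0 < x) :
    collatzT (collatzT (collatzT x)) ≠ x := by
  simp only [collatzT]
  split_ifs <;> omega
end
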